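/- arXiv:2501.13096 — 3 statements merged into one kernel-verified Lean document; each statement's English description precedes it below -/
import Mathlib

section
/- Let P be an orthogonal projection and L a unitary operator on a Hilbert space such that the commutator [P,L] is a compact operator. Then the operator PLP + (1-P) is Fredholm; in particular its kernel is finite-dimensional. -/
open ContinuousLinearMap

private lemma aux_key {R : Type*} [Ring R] (P M L : R) (h2 : P * P = P) (h1 : M * L = 1) :
    (P * M * P + (1 - P)) * (P * L * P + (1 - P)) - 1 = P * M * (P * L - L * P) * P := by
  have e1 : (P * M * P) * (P * L * P) = P * M * P * L * P := by
    rw [show (P * M * P) * (P * L * P) = P * M * (P * P) * L * P by noncomm_ring, h2]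
  have e2 : (P * M * P) * (1 - P) = 0 := by
    rw [mul_sub, mul_one, show P * M * P * P = P * M * (P * P) by noncomm_ring, h2, sub_self]
  have e3 : (1 - P) * (P * L * P) = 0 := by
    rw [sub_mul, one_mul, show P * (P * L * P) = (P * P) * L * P by noncomm_ring, h2, sub_self]
  have e4 : (1 - P) * (1 - P) = 1 - P := by
    simp only [mul_sub, sub_mul, mul_one, one_mul, h2]; abel
  have e5 : P * M * (L * P) * P = P := by
    rw [show P * M * (L * P) * P = P * (M * L) * (P * P) by noncomm_ring]; simp only [h1, h2, mul_one]
  calc (P * M * P + (1 - P)) * (P * L * P + (1 - P)) - 1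
      = (P * M * P) * (P * L * P) + (P * M * P) * (1 - P) + (1 - P) * (P * L * P)
          + (1 - P) * (1 - P) - 1 := by noncomm_ring
    _ = P * M * P * L * P - P := by rw [e1, e2, e3, e4]; abel
    _ = P * M * (P * L) * P - P * M * (L * P) * P := by rw [e5]; noncomm_ring
    _ = P * M * (P * L - L * P) * P := by noncomm_ring

/-- If `P` is an orthogonal projection, `L` unitary, and `[P,L]` is compact,
then `PLP + (1-P)` is Fredholm (invertible modulo compacts, i.e. Atkinson);
in particular its kernel is finite dimensional. -/
theorem stmt1 {H : Type*} [NormedAddCommGroup H] [InnerProductSpace ℂ H] [CompleteSpace H]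
    (P L : H →L[ℂ] H) (hP : IsSelfAdjoint P) (hP2 : P * P = P)
    (hL : L ∈ unitary (H →L[ℂ] H))
    (hc : IsCompactOperator ⇑(P * L - L * P)) :
    (∃ S : H →L[ℂ] H,
        IsCompactOperator ⇑(S * (P * L * P + (1 - P)) - 1) ∧
        IsCompactOperator ⇑((P * L * P + (1 - P)) * S - 1)) ∧
      FiniteDimensional ℂ (LinearMap.ker ((P * L * P + (1 - P) : H →L[ℂ] H) : H →ₗ[ℂ] H)) := by
  set M : H →L[ℂ] H := star L with hM
  have h1 : M * L = 1 := hL.1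
  have h1' : L * M = 1 := hL.2
  -- compactness of A ∘ [P,L] ∘ B
  have comp3 : ∀ A B : H →L[ℂ] H, IsCompactOperator ⇑(A * (P * L - L * P) * B) := by
    intro A B
    have h := (hc.comp_clm B).clm_comp A
    have : ⇑(A * (P * L - L * P) * B) = ⇑A ∘ ⇑(P * L - L * P) ∘ ⇑B := by
      ext x; simp [ContinuousLinearMap.mul_apply, Function.comp]
    rw [this]; exact h
  set S : H →L[ℂ] H := P * M * P + (1 - P) with hS
  set T : H →L[ℂ] H := P * L * P + (1 - P) with hT
  -- first identity
  have eq1 : S * T - 1 = (P * M) * (P * L - L * P) * P := by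
    rw [hS, hT, aux_key P M L hP2 h1]
  have hK1 : IsCompactOperator ⇑(S * T - 1) := by rw [eq1]; exact comp3 _ _
  -- second identity
  have hMP : P * M - M * P = -(M * (P * L - L * P) * M) := by
    have a1 : M * (P * L) * M = M * P := by
      rw [show M * (P * L) * M = (M * P) * (L * M) by noncomm_ring, h1', mul_one]
    have a2 : M * (L * P) * M = P * M := by
      rw [show M * (L * P) * M = (M * L) * (P * M) by noncomm_ring, h1, one_mul]
    calc P * M - M * P = -(M * (P * L) * M - M * (L * P) * M) := by rw [a1, a2]; abel
      _ = -(M * (P * L - L * P) * M) := by noncomm_ring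
  have eq2 : T * S - 1 = -((P * L * M) * (P * L - L * P) * (M * P)) := by
    rw [hT, hS, aux_key P L M hP2 h1', hMP]
    noncomm_ring
  have hK2 : IsCompactOperator ⇑(T * S - 1) := by
    rw [eq2]
    have h := (comp3 (P * L * M) (M * P)).neg
    exact h
  refine ⟨⟨S, hK1, hK2⟩, ?_⟩
  -- finite dimensional kernel
  set K : H →L[ℂ] H := S * T - 1 with hKdef
  obtain ⟨C, hCcomp, hCsub⟩ := hK1.image_closedBall_subset_compact 1
  have hCneg : IsCompact ((fun x : H => -x) '' C) := hCcomp.image continuous_neg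
  have key : ∀ x : H, T x = 0 → x = -(K x) := by
    intro x hx
    simp [hKdef, ContinuousLinearMap.sub_apply, ContinuousLinearMap.mul_apply, hx]
  apply FiniteDimensional.of_isCompact_closedBall₀ ℂ (one_pos (α := ℝ))
  refine (Topology.IsEmbedding.subtypeVal.isCompact_iff).2 ?_
  apply hCneg.of_isClosed_subset
  · have : Subtype.val '' Metric.closedBall (0 : LinearMap.ker (T : H →ₗ[ℂ] H)) 1
        = (LinearMap.ker (T : H →ₗ[ℂ] H) : Set H) ∩ Metric.closedBall (0 : H) 1 := by
      ext y
      constructor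
      · rintro ⟨⟨z, hz⟩, hzball, rfl⟩
        refine ⟨hz, ?_⟩
        simpa [Metric.mem_closedBall, dist_eq_norm] using hzball
      · rintro ⟨hy, hyball⟩
        exact ⟨⟨y, hy⟩, by simpa [Metric.mem_closedBall, dist_eq_norm] using hyball, rfl⟩
    rw [this]
    exact (ContinuousLinearMap.isClosed_ker T).inter Metric.isClosed_closedBall
  · rintro y ⟨⟨z, hz⟩, hzball, rfl⟩
    refine ⟨K z, hCsub ⟨z, ?_, rfl⟩, (key z hz).symm⟩
    simpa [Metric.mem_closedBall, dist_eq_norm] using hzball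
end

section
/- Let Θ be an antiunitary operator with Θ² = -1 on a Hilbert space, and F a bounded operator with ΘFΘ = -F*. Then every eigenspace of F*F corresponding to a nonzero finite-multiplicity eigenvalue λ > 0 is even-dimensional. -/
local notation "⟪" x ", " y "⟫" => @inner ℂ _ _ x y

open Module Submodule

/-- Abstract even-dimension lemma for an antilinear map with the right
orthogonality properties. -/
lemma evenAux {H : Type*} [NormedAddCommGroup H] [InnerProductSpace ℂ H]
    (J : H → H)
    (hadd : ∀ u v, J (u + v) = J u + J v)
    (hsmul : ∀ (c : ℂ) u, J (c • u) = (starRingEnd ℂ c) • J u)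
    (horth : ∀ u v, ⟪J u, v⟫ = -⟪J v, u⟫)
    (lam : ℝ) (hlam : 0 < lam) :
    ∀ n (K : Submodule ℂ H), FiniteDimensional ℂ K → finrank ℂ K = n →
      (∀ x ∈ K, J x ∈ K) →
      (∀ u ∈ K, ∀ v ∈ K, ⟪J u, J v⟫ = (lam : ℂ) * ⟪v, u⟫) →
      Even n := by
  intro n
  induction n using Nat.strong_induction_on with
  | _ n IH =>
    intro K hKfin hKrank hKinv hKJJ
    rcases Nat.eq_zero_or_pos n with h0 | hpos
    · simp [h0]
    -- pick a nonzero vector ψ ∈ K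
    have : Nontrivial K := Module.finrank_pos_iff.mp (by rw [hKrank]; omega)
    obtain ⟨⟨ψ, hψK⟩, hψne⟩ := exists_ne (0 : K)
    have hψ0 : ψ ≠ 0 := fun h => hψne (Subtype.ext h)
    have hJψK : J ψ ∈ K := hKinv ψ hψK
    have hJψ0 : J ψ ≠ 0 := by
      intro h
      have h1 : ⟪J ψ, J ψ⟫ = (lam : ℂ) * ⟪ψ, ψ⟫ := hKJJ ψ hψK ψ hψK
      rw [h, inner_zero_left] at h1
      rcases mul_eq_zero.mp h1.symm with h2 | h2
      · exact (by exact_mod_cast hlam.ne' : (lam : ℂ) ≠ 0) h2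
      · exact hψ0 (inner_self_eq_zero.mp h2)
    have hψJψ : ⟪J ψ, ψ⟫ = 0 := by
      have := horth ψ ψ
      linear_combination this / 2
    have hψJψ' : ⟪ψ, J ψ⟫ = 0 := by
      rw [← inner_conj_symm, hψJψ, map_zero]
    -- the 2-dimensional subspace
    set W : Submodule ℂ H := span ℂ (Set.range ![ψ, J ψ]) with hW
    have hli : LinearIndependent ℂ ![ψ, J ψ] := by
      rw [LinearIndependent.pair_iff]
      intro s t hst
      have h1 : ⟪ψ, s • ψ + t • J ψ⟫ = 0 := by rw [hst, inner_zero_right]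
      rw [inner_add_right, inner_smul_right, inner_smul_right, hψJψ', mul_zero,
        add_zero, mul_eq_zero] at h1
      have hs : s = 0 := h1.resolve_right (fun h => hψ0 (inner_self_eq_zero.mp h))
      subst hs
      rw [zero_smul, zero_add, smul_eq_zero] at hst
      exact ⟨rfl, hst.resolve_right hJψ0⟩
    have hWrank : finrank ℂ W = 2 := by
      rw [hW, finrank_span_eq_card hli]
      simp
    have hWK : W ≤ K := by
      rw [hW, span_le]
      rintro x ⟨i, rfl⟩
      fin_cases i
      · exact hψK
      · exact hJψK
    have hWfin : FiniteDimensional ℂ W := by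
      apply FiniteDimensional.span_of_finite
      exact Set.finite_range _
    -- decompose K = W ⊔ (Wᗮ ⊓ K)
    have hsup : W ⊔ Wᗮ = ⊤ := Submodule.sup_orthogonal_of_hasOrthogonalProjection
    have hdecomp : W ⊔ (Wᗮ ⊓ K) = K := by
      rw [← sup_inf_assoc_of_le _ hWK, hsup, top_inf_eq]
    set K' : Submodule ℂ H := Wᗮ ⊓ K with hK'
    have hK'le : K' ≤ K := inf_le_right
    have hK'fin : FiniteDimensional ℂ K' := Submodule.finiteDimensional_of_le hK'le
    have hWinfK' : W ⊓ K' = ⊥ := by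
      rw [eq_bot_iff]
      rintro x ⟨h1, h2, -⟩
      have h3 : ⟪x, x⟫ = 0 := (Submodule.mem_orthogonal W x).mp h2 x h1
      simpa using inner_self_eq_zero.mp h3
    have hrank : n = 2 + finrank ℂ K' := by
      have := Submodule.finrank_sup_add_finrank_inf_eq W K'
      rw [hdecomp, hWinfK', hWrank] at this
      simp at this
      omega
    -- K' is J-invariant
    have hK'inv : ∀ x ∈ K', J x ∈ K' := by
      intro x hx
      obtain ⟨hxW, hxK⟩ := hx
      refine Submodule.mem_inf.mpr ⟨(Submodule.mem_orthogonal _ _).mpr ?_, hKinv x hxK⟩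
      have hinner1 : ⟪ψ, J x⟫ = 0 := by
        rw [← inner_conj_symm, horth x ψ]
        have : ⟪J ψ, x⟫ = 0 := (Submodule.mem_orthogonal W x).mp hxW (J ψ) (subset_span ⟨1, rfl⟩)
        rw [this]
        simp
      have hinner2 : ⟪J ψ, J x⟫ = 0 := by
        rw [hKJJ ψ hψK x hxK]
        have : ⟪ψ, x⟫ = 0 := (Submodule.mem_orthogonal W x).mp hxW ψ (subset_span ⟨0, rfl⟩)
        rw [← inner_conj_symm, this]
        simp
      intro u hu
      induction hu using Submodule.span_induction with
      | mem y hy =>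
        obtain ⟨i, rfl⟩ := hy
        fin_cases i
        · exact hinner1
        · exact hinner2
      | zero => simp
      | add a b _ _ ha hb => rw [inner_add_left, ha, hb, add_zero]
      | smul c a _ ha => rw [inner_smul_left, ha, mul_zero]
    have hK'JJ : ∀ u ∈ K', ∀ v ∈ K', ⟪J u, J v⟫ = (lam : ℂ) * ⟪v, u⟫ :=
      fun u hu v hv => hKJJ u (hK'le hu) v (hK'le hv)
    have hlt : finrank ℂ K' < n := by omega
    have := IH _ hlt K' hK'fin rfl hK'inv hK'JJ
    rw [hrank]
    exact even_two.add this

/-- If `Θ` is antiunitary with `Θ² = -1` and `F` is bounded with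
`ΘFΘ = -F*`, then every eigenspace of `F*F` for a nonzero eigenvalue `λ > 0` of finite
multiplicity is even dimensional. -/
theorem stmt7 {H : Type*} [NormedAddCommGroup H] [InnerProductSpace ℂ H] [CompleteSpace H]
    (Θ : H → H)
    (hadd : ∀ u v, Θ (u + v) = Θ u + Θ v)
    (hsmul : ∀ (c : ℂ) u, Θ (c • u) = (starRingEnd ℂ c) • Θ u)
    (hinner : ∀ u v, ⟪Θ u, Θ v⟫ = ⟪v, u⟫)
    (hsq : ∀ u, Θ (Θ u) = -u)
    (F : H →L[ℂ] H) (hF : ∀ u, Θ (F (Θ u)) = -((star F) u))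
    (lam : ℝ) (hlam : 0 < lam)
    (hfin : FiniteDimensional ℂ
      (Module.End.eigenspace ((star F * F : H →L[ℂ] H) : H →ₗ[ℂ] H) (lam : ℂ))) :
    Even (Module.finrank ℂ
      (Module.End.eigenspace ((star F * F : H →L[ℂ] H) : H →ₗ[ℂ] H) (lam : ℂ))) := by
  set K := Module.End.eigenspace ((star F * F : H →L[ℂ] H) : H →ₗ[ℂ] H) (lam : ℂ) with hK
  set J : H → H := fun u => Θ (F u) with hJ
  -- basic facts about Θ
  have hΘ0 : Θ 0 = 0 := by
    have h := hadd 0 0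
    rw [add_zero] at h
    exact (left_eq_add.mp h)
  have hΘneg : ∀ u, Θ (-u) = -Θ u := by
    intro u
    have h := hadd u (-u)
    rw [add_neg_cancel, hΘ0] at h
    exact eq_neg_of_add_eq_zero_right h.symm
  have hsq' : ∀ u, u = -Θ (Θ u) := fun u => by rw [hsq u, neg_neg]
  -- star F applied to Θ
  have hFstar : ∀ u, (star F) (Θ u) = J u := by
    intro u
    have h := hF (Θ u)
    rw [hsq u] at h
    have : F (-u) = -(F u) := map_neg F u
    rw [this, hΘneg] at h
    have := neg_injective h
    exact this.symm
  have hFΘ : ∀ u, F (Θ u) = Θ ((star F) u) := by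
    intro u
    have h := congrArg Θ (hF u)
    rw [hsq, hΘneg] at h
    exact neg_injective h
  -- adjoint facts
  have hadj : ∀ (x y : H), ⟪(star F) x, y⟫ = ⟪x, F y⟫ := by
    intro x y
    rw [ContinuousLinearMap.star_eq_adjoint]
    exact ContinuousLinearMap.adjoint_inner_left F y x
  -- orthogonality
  have horth : ∀ u v, ⟪J u, v⟫ = -⟪J v, u⟫ := by
    intro u v
    conv_lhs => rw [hsq' v]
    rw [inner_neg_right, hinner, ← hadj, hFstar]
  -- membership in K
  have hmemK : ∀ u, u ∈ K ↔ (star F) (F u) = (lam : ℂ) • u := by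
    intro u
    rw [hK, Module.End.mem_eigenspace_iff]
    rfl
  -- K is J-invariant
  have hKinv : ∀ u ∈ K, J u ∈ K := by
    intro u hu
    rw [hmemK] at hu ⊢
    have h1 : F (J u) = (lam : ℂ) • Θ u := by
      show F (Θ (F u)) = _
      rw [hFΘ, hu, hsmul]
      norm_num
    rw [h1, map_smul, hFstar]
  -- the inner product relation on K
  have hKJJ : ∀ u ∈ K, ∀ v ∈ K, ⟪J u, J v⟫ = (lam : ℂ) * ⟪v, u⟫ := by
    intro u hu v hv
    rw [hmemK] at hv
    show ⟪Θ (F u), Θ (F v)⟫ = _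
    rw [hinner, ← hadj, hv, inner_smul_left]
    norm_num
  exact evenAux J (fun u v => by simp [hJ, hadd]) (fun c u => by simp [hJ, hsmul])
    horth lam hlam _ K hfin rfl hKinv hKJJ
end

section
/- Let P be an orthogonal projection and L a unitary operator on a Hilbert space. With A = P^⊥ L P (P^⊥ = 1-P), one has |PLP + P^⊥|² = 1 - |A|², where |T|² = T*T. Consequently, dim ker(PLP + P^⊥) equals the multiplicity of 1 as an eigenvalue of |A|². -/
/-- With `P` an orthogonal projection, `L` unitary, `A = (1-P)LP`,
one has `|PLP + (1-P)|² = 1 - |A|²`, and the dimension of the kernel of `PLP + (1-P)`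
equals the multiplicity of `1` as an eigenvalue of `|A|² = A*A`. -/
theorem stmt8 {H : Type*} [NormedAddCommGroup H] [InnerProductSpace ℂ H] [CompleteSpace H]
    (P L : H →L[ℂ] H) (hP : IsSelfAdjoint P) (hP2 : P * P = P)
    (hL : L ∈ unitary (H →L[ℂ] H)) :
    star (P * L * P + (1 - P)) * (P * L * P + (1 - P))
      = 1 - star ((1 - P) * L * P) * ((1 - P) * L * P) ∧
    Module.finrank ℂ (LinearMap.ker ((P * L * P + (1 - P) : H →L[ℂ] H) : H →ₗ[ℂ] H))
      = Module.finrank ℂ (Module.End.eigenspace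
          ((star ((1 - P) * L * P) * ((1 - P) * L * P) : H →L[ℂ] H) : H →ₗ[ℂ] H) 1) := by
  have hPs : star P = P := hP
  have hSL : star L * L = 1 := hL.1
  set S := star L with hS
  -- key algebraic identity
  have key : star (P * L * P + (1 - P)) * (P * L * P + (1 - P))
      = 1 - star ((1 - P) * L * P) * ((1 - P) * L * P) := by
    have hstar : star (P * L * P + (1 - P)) = P * S * P + (1 - P) := by
      simp [star_mul, hPs, mul_assoc, hS]
    have hAstar : star ((1 - P) * L * P) = P * S * (1 - P) := by
      simp [star_mul, star_sub, hPs, mul_assoc, hS]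
    rw [hstar, hAstar]
    have e1 : (P * S * P + (1 - P)) * (P * L * P + (1 - P))
        = P * S * (P * P) * L * P + P * S * (P * (1 - P)) + ((1 - P) * P) * (L * P)
          + (1 - (P + P) + P * P) := by noncomm_ring
    have e2 : (P * S * (1 - P)) * ((1 - P) * L * P)
        = P * (S * L) * P - P * S * P * L * P - P * S * P * L * P
          + P * S * (P * P) * L * P := by noncomm_ring
    rw [e1, e2, hP2, hSL]
    have hP10 : P * (1 - P) = 0 := by rw [mul_sub, mul_one, hP2, sub_self]
    have hP01 : (1 - P) * P = 0 := by rw [sub_mul, one_mul, hP2, sub_self]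
    rw [hP10, hP01]
    simp only [mul_zero, zero_mul, add_zero, zero_add, mul_one, one_mul, hP2]
    abel
  refine ⟨key, ?_⟩
  set M := P * L * P + (1 - P) with hM
  set T : H →L[ℂ] H := star ((1 - P) * L * P) * ((1 - P) * L * P) with hT
  have hker : LinearMap.ker ((M : H →L[ℂ] H) : H →ₗ[ℂ] H)
      = Module.End.eigenspace ((T : H →L[ℂ] H) : H →ₗ[ℂ] H) 1 := by
    ext x
    rw [LinearMap.mem_ker, Module.End.mem_eigenspace_iff]
    have hMM : ∀ y, (star M * M) y = y - T y := by
      intro y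
      have := congrArg (fun (f : H →L[ℂ] H) => f y) key
      simpa using this
    constructor
    · intro hx
      have h0 : (star M * M) x = 0 := by
        simp only [ContinuousLinearMap.coe_coe] at hx
        simp [ContinuousLinearMap.mul_apply, hx]
      have h1 := hMM x
      rw [h0] at h1
      have h2 : T x = x := (sub_eq_zero.mp h1.symm).symm
      simp [h2]
    · intro hx
      have hTx : T x = x := by simpa using hx
      have h0 : (star M * M) x = 0 := by rw [hMM x, hTx, sub_self]
      have hinner : (inner ℂ (M x) (M x) : ℂ) = 0 := by
        have : (inner ℂ x ((star M * M) x) : ℂ) = (inner ℂ (M x) (M x) : ℂ) := by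
          rw [ContinuousLinearMap.mul_apply, ContinuousLinearMap.star_eq_adjoint,
            ContinuousLinearMap.adjoint_inner_right]
        rw [← this, h0, inner_zero_right]
      exact inner_self_eq_zero.mp hinner
  rw [hker]
end
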